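/- arXiv:1502.07212 — 9 statements merged into one kernel-verified Lean document; each statement's English description precedes it below -/
import Mathlib

section
/- Let q ∈ (1,2), and define the maps T_0(x) = qx and T_1(x) = qx - 1. With y_j = Π(0 1^j (10)^∞) and z_j = Π(1 0^j (01)^∞), for all m ≥ 0 and j ≥ 1 one has T_0^m(T_1(y_j)) - (1+q^3)/(q^4-1) = -T_1^m(T_0(z_j)) + (q+q^2)/(q^4-1). -/
/-- `y q j = Π(0 1^j (10)^∞)`: digit 0, then j ones, then (10) repeated. -/
noncomputable def yExp (q : ℝ) (j : ℕ) : ℝ :=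
  ∑' i : ℕ, (if i = 0 then (0:ℝ) else if i ≤ j then 1
    else if (i - (j + 1)) % 2 = 0 then 1 else 0) / q ^ (i + 1)

/-- `z q j = Π(1 0^j (01)^∞)`: digit 1, then j zeros, then (01) repeated. -/
noncomputable def zExp (q : ℝ) (j : ℕ) : ℝ :=
  ∑' i : ℕ, (if i = 0 then (1:ℝ) else if i ≤ j then 0
    else if (i - (j + 1)) % 2 = 0 then 0 else 1) / q ^ (i + 1)

lemma summable_aux (q : ℝ) (hq : 1 < q) (f : ℕ → ℝ) (hf : ∀ i, f i = 0 ∨ f i = 1) :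
    Summable (fun i : ℕ => f i / q ^ (i + 1)) := by
  have hq0 : (0:ℝ) < q := lt_trans one_pos hq
  have hlt : (1/q) < 1 := by
    rw [div_lt_one hq0]; exact hq
  have hgeo : Summable (fun i : ℕ => (1/q) ^ (i + 1)) := by
    simpa [pow_succ, mul_comm] using (summable_geometric_of_lt_one (by positivity) hlt).mul_left (1/q)
  refine Summable.of_nonneg_of_le (fun i => ?_) (fun i => ?_) hgeo
  · rcases hf i with h | h
    · simp [h]
    · rw [h]; positivity
  · have he : (1/q : ℝ) ^ (i + 1) = 1 / q ^ (i + 1) := by rw [div_pow, one_pow]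
    rw [he]
    rcases hf i with h | h
    · rw [h, zero_div]; positivity
    · rw [h]

lemma yz_sum (q : ℝ) (hq : 1 < q) (j : ℕ) : yExp q j + zExp q j = 1 / (q - 1) := by
  have hq0 : (0:ℝ) < q := lt_trans one_pos hq
  set f : ℕ → ℝ := fun i => (if i = 0 then (0:ℝ) else if i ≤ j then 1
    else if (i - (j + 1)) % 2 = 0 then 1 else 0) with hf
  set g : ℕ → ℝ := fun i => (if i = 0 then (1:ℝ) else if i ≤ j then 0
    else if (i - (j + 1)) % 2 = 0 then 0 else 1) with hg
  have hf01 : ∀ i, f i = 0 ∨ f i = 1 := by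
    intro i; simp only [hf]; split_ifs <;> simp
  have hg01 : ∀ i, g i = 0 ∨ g i = 1 := by
    intro i; simp only [hg]; split_ifs <;> simp
  have hsf := summable_aux q hq f hf01
  have hsg := summable_aux q hq g hg01
  have key : yExp q j + zExp q j = ∑' i : ℕ, (f i + g i) / q ^ (i + 1) := by
    rw [yExp, zExp, ← Summable.tsum_add hsf hsg]
    exact tsum_congr fun i => by rw [add_div]
  rw [key]
  have hfg : ∀ i, (f i + g i) / q ^ (i + 1) = (1/q) ^ (i + 1) := by
    intro i
    have : f i + g i = 1 := by
      simp only [hf, hg]; split_ifs <;> norm_num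
    rw [this, div_pow, one_pow]
  rw [tsum_congr hfg]
  have hlt : (1/q) < 1 := by rw [div_lt_one hq0]; exact hq
  have : ∑' i : ℕ, (1/q) ^ (i + 1) = (1/q) * ∑' i : ℕ, (1/q) ^ i := by
    rw [← tsum_mul_left]
    exact tsum_congr fun i => by rw [pow_succ, mul_comm]
  rw [this, tsum_geometric_of_lt_one (by positivity) hlt]
  rw [one_sub_div (ne_of_gt hq0)]
  field_simp

lemma iter0 (q : ℝ) (m : ℕ) (x : ℝ) : (fun x : ℝ => q * x)^[m] x = q ^ m * x := by
  induction m with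
  | zero => simp
  | succ n ih => rw [Function.iterate_succ_apply', ih, pow_succ]; ring

lemma iter1 (q : ℝ) (hq : q ≠ 1) (m : ℕ) (x : ℝ) :
    (fun x : ℝ => q * x - 1)^[m] x = q ^ m * x - (q ^ m - 1) / (q - 1) := by
  have h1 : q - 1 ≠ 0 := sub_ne_zero.mpr hq
  induction m with
  | zero => simp
  | succ n ih =>
    rw [Function.iterate_succ_apply', ih, pow_succ]
    field_simp
    ring

/-- T_0^m(T_1(y_j)) - (1+q^3)/(q^4-1) = -T_1^m(T_0(z_j)) + (q+q^2)/(q^4-1). -/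
theorem iterate_symmetry (q : ℝ) (hq : q ∈ Set.Ioo (1:ℝ) 2) (m j : ℕ) (hj : 1 ≤ j) :
    (fun x : ℝ => q * x)^[m] (q * yExp q j - 1) - (1 + q^3) / (q^4 - 1) =
      -(fun x : ℝ => q * x - 1)^[m] (q * zExp q j) + (q + q^2) / (q^4 - 1) := by
  obtain ⟨hq1, hq2⟩ := hq
  have hqne : q ≠ 1 := ne_of_gt hq1
  have h1 : q - 1 ≠ 0 := sub_ne_zero.mpr hqne
  have h4 : q ^ 4 - 1 ≠ 0 := by 
    have h4' : 1 < q ^ 4 := by nlinarith [mul_pos (mul_pos (lt_trans one_pos hq1) (lt_trans one_pos hq1)) (lt_trans one_pos hq1), pow_succ q 3, pow_succ q 2, pow_succ q 1]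
    intro h; linarith
  have hsum := yz_sum q hq1 j
  have hz : zExp q j = 1 / (q - 1) - yExp q j := by linarith
  rw [iter0, iter1 q hqne, hz]
  field_simp
  ring
end

section
/- Let q ∈ (1,2), T_0(x) = qx, T_1(x) = qx - 1, y_j = Π(0 1^j (10)^∞), z_j = Π(1 0^j (01)^∞). Then for all j, k ≥ 1 and m ≥ 0: T_0^m(T_1(y_j)) = z_k if and only if T_1^m(T_0(z_j)) = y_k. -/
section Expansions

variable {q : ℝ}

lemma hasSum_inv_pow_succ (hq : 1 < q) : HasSum (fun i : ℕ => 1 / q ^ (i + 1)) (q - 1)⁻¹ := by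
  have hq0 : 0 < q := by linarith
  have hr : q⁻¹ < 1 := inv_lt_one_of_one_lt₀ hq
  have hterm : (fun i : ℕ => 1 / q ^ (i + 1)) = fun i => q⁻¹ * q⁻¹ ^ i := by
    ext i
    rw [one_div, pow_succ, mul_inv, inv_pow, mul_comm]
  have hsum : (q - 1)⁻¹ = q⁻¹ * (1 - q⁻¹)⁻¹ := by field_simp
  rw [hterm, hsum]
  exact (hasSum_geometric_of_lt_one (inv_nonneg.mpr hq0.le) hr).mul_left q⁻¹

lemma summable_digit_div_pow (hq : 1 < q) {d : ℕ → ℝ} (hd₀ : ∀ i, 0 ≤ d i) (hd₁ : ∀ i, d i ≤ 1) :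
    Summable fun i : ℕ => d i / q ^ (i + 1) := by
  have hq0 : 0 < q := by linarith
  refine (hasSum_inv_pow_succ hq).summable.of_nonneg_of_le
    (fun i => div_nonneg (hd₀ i) (pow_nonneg hq0.le _)) fun i => ?_
  exact div_le_div_of_nonneg_right (hd₁ i) (pow_nonneg hq0.le _)

lemma tsum_digit_add_tsum_complement (hq : 1 < q) {d e : ℕ → ℝ} (hd : ∀ i, 0 ≤ d i)
    (he : ∀ i, 0 ≤ e i) (hde : ∀ i, d i + e i = 1) :
    ∑' i : ℕ, d i / q ^ (i + 1) + ∑' i : ℕ, e i / q ^ (i + 1) = (q - 1)⁻¹ := by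
  have hd₁ : ∀ i, d i ≤ 1 := fun i => by linarith [hde i, he i]
  have he₁ : ∀ i, e i ≤ 1 := fun i => by linarith [hde i, hd i]
  rw [← (summable_digit_div_pow hq hd hd₁).tsum_add (summable_digit_div_pow hq he he₁),
    ← (hasSum_inv_pow_succ hq).tsum_eq]
  simp only [← add_div, hde]

lemma yExp_add_zExp (hq : 1 < q) (j : ℕ) : yExp q j + zExp q j = (q - 1)⁻¹ :=
  tsum_digit_add_tsum_complement hq (fun i => by split_ifs <;> norm_num)
    (fun i => by split_ifs <;> norm_num) fun i => by split_ifs <;> norm_num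

end Expansions

lemma semiconj_mul_mul_sub_one {q : ℝ} (hq : q ≠ 1) :
    Function.Semiconj (fun x : ℝ => (q - 1)⁻¹ - x) (fun x => q * x) (fun x => q * x - 1) := by
  intro x
  have : q - 1 ≠ 0 := sub_ne_zero.mpr hq
  field_simp
  ring

theorem iterate_eq_z_iff_general (q : ℝ) (hq : q ∈ Set.Ioo (1:ℝ) 2) (m j k : ℕ) :
    (fun x : ℝ => q * x)^[m] (q * yExp q j - 1) = zExp q k ↔
      (fun x : ℝ => q * x - 1)^[m] (q * zExp q j) = yExp q k := by
  set σ : ℝ → ℝ := fun x => (q - 1)⁻¹ - x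
  have hσ : Function.Involutive σ := fun x => sub_sub_cancel _ x
  have h₀₁ : Function.Semiconj σ _ _ := semiconj_mul_mul_sub_one hq.1.ne'
  have h₁₀ := h₀₁.inverse_left hσ.leftInverse hσ.rightInverse
  have hyz : ∀ n, σ (yExp q n) = zExp q n := fun n => by
    simp only [σ, ← yExp_add_zExp hq.1 n, add_sub_cancel_left]
  have hzy : ∀ n, σ (zExp q n) = yExp q n := fun n => by rw [← hyz, hσ]
  have hstart : σ (q * yExp q j - 1) = q * zExp q j := by rw [← hyz]; exact h₁₀ (yExp q j)
  rw [← hσ.injective.eq_iff, (h₀₁.iterate_right m).eq, hstart, hzy]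

/-- T_0^m(T_1(y_j)) = z_k ↔ T_1^m(T_0(z_j)) = y_k. -/
theorem iterate_eq_z_iff (q : ℝ) (hq : q ∈ Set.Ioo (1:ℝ) 2) (m j k : ℕ)
    (hj : 1 ≤ j) (hk : 1 ≤ k) :
    (fun x : ℝ => q * x)^[m] (q * yExp q j - 1) = zExp q k ↔
      (fun x : ℝ => q * x - 1)^[m] (q * zExp q j) = yExp q k :=
  iterate_eq_z_iff_general q hq m j k
end

section
/- Let q_1 be the unique root of x^6 - x^4 - x^3 - 2x^2 - x - 1 in (1,2) and q_4 the unique root of x^7 - x^5 - x^4 - 2x^3 - 2x^2 - x - 1 in (1,2). The function q ↦ ln((q^2+1)/(-q^4+q^3+q^2+1)) / ln q is strictly increasing on [q_1, q_4], takes value 3 at q_1 and value 4 at q_4. -/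
/-!
Write `R q = (q² + 1) / (-q⁴ + q³ + q² + 1)`. Since
`(q - 1)(q⁶ - q⁴ - q³ - 2q² - q - 1) = (q² + 1) - q³ (-q⁴ + q³ + q² + 1)`, and similarly with
`q⁴` for the degree-seven polynomial, `R q₁ = q₁³` and `R q₄ = q₄⁴`, which gives the two values.
By the intermediate value theorem and uniqueness, `[q₁, q₄] ⊆ [1.64, 1.7]`. A function `g / log`
increases where `g x < x g'(x) log x`; for `g = log R` this follows on `[1.64, 1.7]` from the
polynomial inequalities `R q ≤ q⁵` and `q R'(q) / R(q) > 5`.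
-/

open Real Set

lemma mem_Icc_of_unique_zero {f : ℝ → ℝ} {s : Set ℝ} {a b x : ℝ} (hab : a ≤ b)
    (hf : ContinuousOn f (Icc a b)) (ha : f a ≤ 0) (hb : 0 ≤ f b) (hs : Icc a b ⊆ s)
    (huniq : ∀ y ∈ s, f y = 0 → y = x) : x ∈ Icc a b := by
  obtain ⟨c, hc, hfc⟩ := intermediate_value_Icc hab hf ⟨ha, hb⟩
  exact huniq c (hs hc) hfc ▸ hc

lemma strictMonoOn_div_log {g g' : ℝ → ℝ} {s : Set ℝ} (hs : Convex ℝ s) (hs1 : s ⊆ Ioi 1)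
    (hg : ∀ x ∈ s, HasDerivAt g (g' x) x) (hlt : ∀ x ∈ s, g x < x * g' x * log x) :
    StrictMonoOn (fun x => g x / log x) s := by
  have hderiv : ∀ x ∈ s, HasDerivAt (fun x => g x / log x)
      ((g' x * log x - g x * x⁻¹) / log x ^ 2) x := fun x hx =>
    (hg x hx).div (hasDerivAt_log (by linarith [mem_Ioi.1 (hs1 hx)]))
      (log_pos (hs1 hx)).ne'
  refine strictMonoOn_of_hasDerivWithinAt_pos hs
    (fun x hx => (hderiv x hx).continuousAt.continuousWithinAt)
    (fun x hx => (hderiv x (interior_subset hx)).hasDerivWithinAt) fun x hx => ?_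
  have hxs : x ∈ s := interior_subset hx
  have hx1 : 1 < x := hs1 hxs
  have hpos : 0 < g' x * log x - g x * x⁻¹ := by
    rw [sub_pos, ← div_eq_mul_inv, div_lt_iff₀ (by linarith)]
    linarith [hlt x hxs]
  exact div_pos hpos (pow_pos (log_pos hx1) 2)

lemma log_div_log_eq_of_eq_pow {r q : ℝ} (n : ℕ) (hq : 1 < q) (h : r = q ^ n) :
    log r / log q = n := by
  rw [h, log_pow, mul_div_cancel_right₀ _ (log_pos hq).ne']

section Estimates

variable {x : ℝ}

lemma neg_pow_four_add_pos (h1 : 1.64 ≤ x) (h2 : x ≤ 1.7) :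
    0 < -x ^ 4 + x ^ 3 + x ^ 2 + 1 := by
  nlinarith [mul_nonneg (sub_nonneg.2 h1) (sub_nonneg.2 h2), sq_nonneg (x - 1.67),
    mul_nonneg (mul_nonneg (sub_nonneg.2 h1) (sub_nonneg.2 h2)) (sq_nonneg x)]

lemma sq_add_one_le_pow_five_mul (h1 : 1.64 ≤ x) (h2 : x ≤ 1.7) :
    x ^ 2 + 1 ≤ x ^ 5 * (-x ^ 4 + x ^ 3 + x ^ 2 + 1) := by
  have hI := mul_nonneg (sub_nonneg.2 h1) (sub_nonneg.2 h2)
  nlinarith [hI, sq_nonneg (x - 1.67), mul_nonneg hI (sq_nonneg x),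
    mul_nonneg hI (sq_nonneg (x ^ 2)), mul_nonneg hI (sq_nonneg (x ^ 2 - 2 * x))]

lemma five_lt_elasticity (h1 : 1.64 ≤ x) (h2 : x ≤ 1.7) :
    5 * ((x ^ 2 + 1) * (-x ^ 4 + x ^ 3 + x ^ 2 + 1)) <
      2 * x ^ 2 * (-x ^ 4 + x ^ 3 + x ^ 2 + 1) -
        x * (-4 * x ^ 3 + 3 * x ^ 2 + 2 * x) * (x ^ 2 + 1) := by
  have hI := mul_nonneg (sub_nonneg.2 h1) (sub_nonneg.2 h2)
  nlinarith [hI, sq_nonneg (x - 1.67), mul_nonneg hI (sq_nonneg x),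
    mul_nonneg hI (sq_nonneg (x ^ 2))]

end Estimates

lemma hasDerivAt_log_sub_log {x : ℝ} (hD : 0 < -x ^ 4 + x ^ 3 + x ^ 2 + 1) :
    HasDerivAt (fun q => log (q ^ 2 + 1) - log (-q ^ 4 + q ^ 3 + q ^ 2 + 1))
      (2 * x / (x ^ 2 + 1) - (-4 * x ^ 3 + 3 * x ^ 2 + 2 * x) / (-x ^ 4 + x ^ 3 + x ^ 2 + 1))
      x := by
  have hN : HasDerivAt (fun q : ℝ => q ^ 2 + 1) (2 * x) x := by
    simpa using (hasDerivAt_pow 2 x).add_const 1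
  have hD' : HasDerivAt (fun q : ℝ => -q ^ 4 + q ^ 3 + q ^ 2 + 1)
      (-4 * x ^ 3 + 3 * x ^ 2 + 2 * x) x := by
    refine ((((hasDerivAt_pow 4 x).neg.add (hasDerivAt_pow 3 x)).add
      (hasDerivAt_pow 2 x)).add_const 1).congr_deriv ?_
    push_cast
    ring
  exact (hN.log (by positivity)).sub (hD'.log hD.ne')

lemma log_sub_log_lt_mul_log {x : ℝ} (h1 : 1.64 ≤ x) (h2 : x ≤ 1.7) :
    log (x ^ 2 + 1) - log (-x ^ 4 + x ^ 3 + x ^ 2 + 1) < x * (2 * x / (x ^ 2 + 1) -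
      (-4 * x ^ 3 + 3 * x ^ 2 + 2 * x) / (-x ^ 4 + x ^ 3 + x ^ 2 + 1)) * log x := by
  have hx : 0 < x := by linarith
  have hD := neg_pow_four_add_pos h1 h2
  have hN : 0 < x ^ 2 + 1 := by positivity
  have hL : 0 < log x := log_pos (by linarith)
  have hle : log (x ^ 2 + 1) - log (-x ^ 4 + x ^ 3 + x ^ 2 + 1) ≤ 5 * log x := by
    have h := log_le_log hN (sq_add_one_le_pow_five_mul h1 h2)
    rw [log_mul (by positivity) hD.ne', log_pow] at h
    push_cast at h
    linarith
  have hlt : 5 < x * (2 * x / (x ^ 2 + 1) -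
      (-4 * x ^ 3 + 3 * x ^ 2 + 2 * x) / (-x ^ 4 + x ^ 3 + x ^ 2 + 1)) := by
    rw [div_sub_div _ _ hN.ne' hD.ne', mul_div_assoc', lt_div_iff₀ (by positivity)]
    linarith [five_lt_elasticity h1 h2]
  nlinarith

lemma strictMonoOn_log_ratio {s : Set ℝ} (hs : Convex ℝ s) (hsub : s ⊆ Icc 1.64 1.7) :
    StrictMonoOn (fun q : ℝ => log ((q ^ 2 + 1) / (-q ^ 4 + q ^ 3 + q ^ 2 + 1)) / log q) s := by
  refine (strictMonoOn_div_log hs (fun x hx => ?_)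
    (fun x hx => hasDerivAt_log_sub_log (neg_pow_four_add_pos (hsub hx).1 (hsub hx).2))
    fun x hx => log_sub_log_lt_mul_log (hsub hx).1 (hsub hx).2).congr fun x hx => ?_
  · exact lt_of_lt_of_le (by norm_num) (hsub hx).1
  · rw [log_div (by positivity) (neg_pow_four_add_pos (hsub hx).1 (hsub hx).2).ne']

/-- the function ln((q²+1)/(-q⁴+q³+q²+1))/ln q is strictly increasing
on [q₁, q₄], with value 3 at q₁ and 4 at q₄. -/
theorem log_ratio_strictMono (q1 q4 : ℝ)
    (hq1 : q1 ∈ Set.Ioo (1:ℝ) 2 ∧ q1^6 - q1^4 - q1^3 - 2*q1^2 - q1 - 1 = 0)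
    (hq1u : ∀ q : ℝ, q ∈ Set.Ioo (1:ℝ) 2 → q^6 - q^4 - q^3 - 2*q^2 - q - 1 = 0 → q = q1)
    (hq4 : q4 ∈ Set.Ioo (1:ℝ) 2 ∧ q4^7 - q4^5 - q4^4 - 2*q4^3 - 2*q4^2 - q4 - 1 = 0)
    (hq4u : ∀ q : ℝ, q ∈ Set.Ioo (1:ℝ) 2 → q^7 - q^5 - q^4 - 2*q^3 - 2*q^2 - q - 1 = 0 → q = q4) :
    StrictMonoOn (fun q : ℝ => Real.log ((q^2 + 1) / (-q^4 + q^3 + q^2 + 1)) / Real.log q)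
      (Set.Icc q1 q4) ∧
    Real.log ((q1^2 + 1) / (-q1^4 + q1^3 + q1^2 + 1)) / Real.log q1 = 3 ∧
    Real.log ((q4^2 + 1) / (-q4^4 + q4^3 + q4^2 + 1)) / Real.log q4 = 4 := by
  have hIoo : ∀ {a b : ℝ}, 1 < a → b < 2 → Icc a b ⊆ Ioo 1 2 :=
    fun ha hb _ hy => ⟨ha.trans_le hy.1, hy.2.trans_lt hb⟩
  have hq1loc : q1 ∈ Icc (1.64 : ℝ) 1.65 :=
    mem_Icc_of_unique_zero (by norm_num) (by fun_prop) (by norm_num) (by norm_num)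
      (hIoo (by norm_num) (by norm_num)) hq1u
  have hq4loc : q4 ∈ Icc (1.69 : ℝ) 1.7 :=
    mem_Icc_of_unique_zero (by norm_num) (by fun_prop) (by norm_num) (by norm_num)
      (hIoo (by norm_num) (by norm_num)) hq4u
  have hD1 := neg_pow_four_add_pos hq1loc.1 (by linarith [hq1loc.2])
  have hD4 := neg_pow_four_add_pos (by linarith [hq4loc.1]) hq4loc.2
  refine ⟨strictMonoOn_log_ratio (convex_Icc q1 q4) (Icc_subset_Icc hq1loc.1 hq4loc.2),
    log_div_log_eq_of_eq_pow 3 hq1.1.1 ?_, log_div_log_eq_of_eq_pow 4 hq4.1.1 ?_⟩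
  · rw [div_eq_iff hD1.ne']
    linear_combination (q1 - 1) * hq1.2
  · rw [div_eq_iff hD4.ne']
    linear_combination (q4 - 1) * hq4.2
end

section
/- Let q ∈ [q_1, q_3], where q_1, q_3 are the roots in (1,2) of x^6 - x^4 - x^3 - 2x^2 - x - 1 and x^5 - x^4 - x^3 - x + 1 respectively. With y_j = Π(0 1^j (10)^∞), one has y_j ≤ (1+q^3)/(q^4-1) for 1 ≤ j ≤ 3, and y_j > (1+q^3)/(q^4-1) for all j ≥ 4. -/
def yDigit (j i : ℕ) : ℝ :=
  if i = 0 then 0 else if i ≤ j then 1 else if (i - (j + 1)) % 2 = 0 then 1 else 0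

lemma yDigit_zero_right (j : ℕ) : yDigit j 0 = 0 := if_pos rfl

lemma yDigit_zero_two_mul (k : ℕ) : yDigit 0 (2 * k) = 0 := by
  unfold yDigit; split_ifs <;> first | rfl | (exfalso; omega)

lemma yDigit_zero_two_mul_add_one (k : ℕ) : yDigit 0 (2 * k + 1) = 1 := by
  unfold yDigit; split_ifs <;> first | rfl | (exfalso; omega)

lemma yDigit_succ_one (j : ℕ) : yDigit (j + 1) 1 = 1 := by
  unfold yDigit; split_ifs <;> first | rfl | (exfalso; omega)

lemma yDigit_succ_add_two (j i : ℕ) : yDigit (j + 1) (i + 2) = yDigit j (i + 1) := by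
  unfold yDigit; split_ifs <;> first | rfl | (exfalso; omega)

section Expansion

variable {q : ℝ}

lemma ne_zero_of_one_lt_abs (hq : 1 < |q|) : q ≠ 0 := by
  rintro rfl; norm_num at hq

lemma sub_one_ne_zero_of_one_lt_abs (hq : 1 < |q|) : q - 1 ≠ 0 := by
  intro h; rw [sub_eq_zero.mp h] at hq; norm_num at hq

lemma sq_sub_one_ne_zero_of_one_lt_abs (hq : 1 < |q|) : q ^ 2 - 1 ≠ 0 :=
  sub_ne_zero.mpr ((one_lt_sq_iff_one_lt_abs q).mpr hq).ne'

/-- The case `j = 0` is the geometric series over the odd positions; each further leading `1`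
maps `y_j` to `q⁻² + q⁻¹ y_j`. -/
theorem hasSum_yDigit (hq : 1 < |q|) (j : ℕ) :
    HasSum (fun i => yDigit j i / q ^ (i + 1))
      (1 / (q * (q - 1)) - 1 / (q ^ (j + 1) * (q ^ 2 - 1))) := by
  have hq0 := ne_zero_of_one_lt_abs hq
  have hq1 := sub_one_ne_zero_of_one_lt_abs hq
  have hq2 := sq_sub_one_ne_zero_of_one_lt_abs hq
  induction j with
  | zero =>
    have hr : |(q ^ 2)⁻¹| < 1 := by
      rw [abs_inv, abs_pow, inv_lt_one₀ (by positivity)]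
      exact one_lt_pow₀ hq two_ne_zero
    have hodd : HasSum (fun k => yDigit 0 (2 * k + 1) / q ^ (2 * k + 1 + 1))
        ((q ^ 2)⁻¹ * (1 - (q ^ 2)⁻¹)⁻¹) := by
      have hterm : (fun k => yDigit 0 (2 * k + 1) / q ^ (2 * k + 1 + 1)) =
          fun k => (q ^ 2)⁻¹ * ((q ^ 2)⁻¹) ^ k := by
        funext k
        rw [yDigit_zero_two_mul_add_one, ← inv_pow, ← pow_succ', ← pow_mul, one_div, inv_pow]
        ring_nf
      rw [hterm]
      exact (hasSum_geometric_of_abs_lt_one hr).mul_left _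
    have heven : HasSum (fun k => yDigit 0 (2 * k) / q ^ (2 * k + 1)) 0 := by
      simpa only [yDigit_zero_two_mul, zero_div] using hasSum_zero
    have hval : 1 / (q * (q - 1)) - 1 / (q ^ (0 + 1) * (q ^ 2 - 1)) =
        0 + (q ^ 2)⁻¹ * (1 - (q ^ 2)⁻¹)⁻¹ := by
      field_simp
      ring
    rw [hval]
    exact HasSum.even_add_odd (f := fun i => yDigit 0 i / q ^ (i + 1)) heven hodd
  | succ j ih =>
    rw [← hasSum_nat_add_iff' 2]
    have hterm : (fun i => yDigit (j + 1) (i + 2) / q ^ (i + 2 + 1)) =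
        fun i => yDigit j (i + 1) / q ^ (i + 1 + 1) / q := by
      funext i
      rw [yDigit_succ_add_two, div_div, ← pow_succ]
    have hval : 1 / (q * (q - 1)) - 1 / (q ^ (j + 1 + 1) * (q ^ 2 - 1)) -
          ∑ i ∈ Finset.range 2, yDigit (j + 1) i / q ^ (i + 1) =
        (1 / (q * (q - 1)) - 1 / (q ^ (j + 1) * (q ^ 2 - 1)) -
          ∑ i ∈ Finset.range 1, yDigit j i / q ^ (i + 1)) / q := by
      simp only [Finset.sum_range_succ, Finset.sum_range_zero, yDigit_zero_right,
        yDigit_succ_one]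
      field_simp
      ring
    rw [hterm, hval]
    exact ((hasSum_nat_add_iff' 1).mpr ih).div_const q

theorem yExp_eq (hq : 1 < |q|) (j : ℕ) :
    yExp q j = 1 / (q * (q - 1)) - 1 / (q ^ (j + 1) * (q ^ 2 - 1)) :=
  (hasSum_yDigit hq j).tsum_eq

theorem yExp_strictMono (hq : 1 < q) : StrictMono (yExp q) := by
  have hq' : 1 < |q| := hq.trans_le (le_abs_self q)
  refine strictMono_nat_of_lt_succ fun j => ?_
  have hq2 : 0 < q ^ 2 - 1 := sub_pos.mpr (one_lt_pow₀ hq two_ne_zero)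
  rw [yExp_eq hq', yExp_eq hq']
  gcongr
  exact j.lt_succ_self

theorem threshold_sub_yExp (hq : 1 < |q|) (j : ℕ) :
    (1 + q ^ 3) / (q ^ 4 - 1) - yExp q j =
      (1 + q ^ 2 - q ^ j * (1 + q ^ 2 + q ^ 3 - q ^ 4)) / (q ^ (j + 1) * (q ^ 4 - 1)) := by
  have hq0 := ne_zero_of_one_lt_abs hq
  have hq1 := sub_one_ne_zero_of_one_lt_abs hq
  have hq2 := sq_sub_one_ne_zero_of_one_lt_abs hq
  have hq4 : q ^ 4 - 1 ≠ 0 := by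
    rw [show q ^ 4 - 1 = (q ^ 2 - 1) * (q ^ 2 + 1) by ring]
    exact mul_ne_zero hq2 (by positivity)
  rw [yExp_eq hq]
  field_simp
  ring

theorem yExp_three_le_threshold (hq : 1 < q)
    (hp : 0 ≤ q ^ 6 - q ^ 4 - q ^ 3 - 2 * q ^ 2 - q - 1) :
    yExp q 3 ≤ (1 + q ^ 3) / (q ^ 4 - 1) := by
  rw [← sub_nonneg, threshold_sub_yExp (hq.trans_le (le_abs_self q))]
  have hq4 : 0 < q ^ 4 - 1 := sub_pos.mpr (one_lt_pow₀ hq (by norm_num))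
  refine div_nonneg ?_ (by positivity)
  linear_combination mul_nonneg (sub_nonneg.mpr hq.le) hp

theorem threshold_lt_yExp_four (hq : 1 < q)
    (hn : q ^ 7 - q ^ 5 - q ^ 4 - 2 * q ^ 3 - 2 * q ^ 2 - q - 1 < 0) :
    (1 + q ^ 3) / (q ^ 4 - 1) < yExp q 4 := by
  rw [← sub_neg, threshold_sub_yExp (hq.trans_le (le_abs_self q))]
  have hq4 : 0 < q ^ 4 - 1 := sub_pos.mpr (one_lt_pow₀ hq (by norm_num))
  refine div_neg_of_neg_of_pos ?_ (by positivity)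
  linear_combination mul_neg_of_pos_of_neg (sub_pos.mpr hq) hn

end Expansion

open Finset in
theorem sum_mul_pow_le_pow_of_le {n : ℕ} (c : Fin n → ℝ) (hc : ∀ k, 0 ≤ c k) {a b : ℝ}
    (ha : 0 < a) (hab : a ≤ b) (h : ∑ k, c k * a ^ (k : ℕ) ≤ a ^ n) :
    ∑ k, c k * b ^ (k : ℕ) ≤ b ^ n := by
  set t := b / a
  have ht : 1 ≤ t := (one_le_div ha).mpr hab
  have hb : b = t * a := (div_mul_cancel₀ b ha.ne').symm
  calc ∑ k, c k * b ^ (k : ℕ) ≤ ∑ k, t ^ n * (c k * a ^ (k : ℕ)) := by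
        refine sum_le_sum fun k _ => ?_
        have htk : t ^ (k : ℕ) ≤ t ^ n := pow_le_pow_right₀ ht k.isLt.le
        rw [hb, mul_pow, mul_left_comm]
        exact mul_le_mul_of_nonneg_right htk (mul_nonneg (hc k) (by positivity))
    _ = t ^ n * ∑ k, c k * a ^ (k : ℕ) := (mul_sum ..).symm
    _ ≤ t ^ n * a ^ n := by gcongr
    _ = b ^ n := by rw [hb, mul_pow]

theorem sextic_nonneg_of_root_le {r x : ℝ} (hr : 0 < r) (hrx : r ≤ x)
    (hroot : r ^ 6 - r ^ 4 - r ^ 3 - 2 * r ^ 2 - r - 1 = 0) :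
    0 ≤ x ^ 6 - x ^ 4 - x ^ 3 - 2 * x ^ 2 - x - 1 := by
  have hsum (y : ℝ) : ∑ k, ![1, 1, 2, 1, 1, 0] k * y ^ (k : ℕ) =
      1 + (y + (2 * y ^ 2 + (y ^ 3 + y ^ 4))) := by
    simp [Fin.sum_univ_succ]
  have h := sum_mul_pow_le_pow_of_le _ (by intro k; fin_cases k <;> norm_num) hr hrx
    ((hsum r).trans_le (by linarith))
  rw [hsum] at h
  linarith

theorem septic_neg_of_le_quintic_root {x r : ℝ} (hx : 0 < x) (hxr : x ≤ r)
    (hroot : r ^ 5 - r ^ 4 - r ^ 3 - r + 1 = 0) :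
    x ^ 7 - x ^ 5 - x ^ 4 - 2 * x ^ 3 - 2 * x ^ 2 - x - 1 < 0 := by
  have hrem : r ^ 4 - 2 * r ^ 2 - r - 2 < 0 := by
    have hr := hx.trans_le hxr
    nlinarith [sq_nonneg (r - 1), pow_pos hr 2, pow_pos hr 3]
  have hr : r ^ 7 - r ^ 5 - r ^ 4 - 2 * r ^ 3 - 2 * r ^ 2 - r - 1 < 0 := by
    linear_combination (r ^ 2 + r + 1) * hroot + hrem
  have hsum (y : ℝ) : ∑ k, ![1, 1, 2, 2, 1, 1, 0] k * y ^ (k : ℕ) =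
      1 + (y + (2 * y ^ 2 + (2 * y ^ 3 + (y ^ 4 + y ^ 5)))) := by
    simp [Fin.sum_univ_succ]
  by_contra! hxnonneg
  have h := sum_mul_pow_le_pow_of_le _ (by intro k; fin_cases k <;> norm_num) hx hxr
    ((hsum x).trans_le (by linarith))
  rw [hsum] at h
  linarith

/-- for q ∈ [q₁,q₃], y_j ≤ (1+q³)/(q⁴-1) for 1 ≤ j ≤ 3 and > for j ≥ 4. -/
theorem yj_position (q1 q3 q : ℝ)
    (hq1 : q1 ∈ Set.Ioo (1:ℝ) 2 ∧ q1^6 - q1^4 - q1^3 - 2*q1^2 - q1 - 1 = 0)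
    (hq3 : q3 ∈ Set.Ioo (1:ℝ) 2 ∧ q3^5 - q3^4 - q3^3 - q3 + 1 = 0)
    (hq : q ∈ Set.Icc q1 q3) :
    (∀ j : ℕ, 1 ≤ j → j ≤ 3 → yExp q j ≤ (1 + q^3) / (q^4 - 1)) ∧
    (∀ j : ℕ, 4 ≤ j → yExp q j > (1 + q^3) / (q^4 - 1)) := by
  obtain ⟨⟨hq1_gt, -⟩, hq1_root⟩ := hq1
  obtain ⟨-, hq3_root⟩ := hq3
  have hq_gt : 1 < q := hq1_gt.trans_le hq.1
  have hy3 := yExp_three_le_threshold hq_gt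
    (sextic_nonneg_of_root_le (zero_lt_one.trans hq1_gt) hq.1 hq1_root)
  have hy4 := threshold_lt_yExp_four hq_gt
    (septic_neg_of_le_quintic_root (zero_lt_one.trans hq_gt) hq.2 hq3_root)
  have hmono := (yExp_strictMono hq_gt).monotone
  exact ⟨fun j _ hj => (hmono hj).trans hy3, fun j hj => hy4.trans_le (hmono hj)⟩
end

section
/- Let q_3 be the unique root in (1,2) of x^5 - x^4 - x^3 - x + 1 = 0, and let T_0(x) = q_3 x, T_1(x) = q_3 x - 1. Then for the point w = T_1(1) = q_3 - 1, the orbit satisfies (T_0^3 ∘ T_1)^k(w) ∈ [1/q_3, 1/(q_3^2 - q_3)] for all k ≥ 0. -/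
/-- the orbit of q₃ - 1 under T₀³ ∘ T₁ stays in the switch region. -/
theorem orbit_in_switch_region (q3 : ℝ)
    (hq3 : q3 ∈ Set.Ioo (1:ℝ) 2 ∧ q3^5 - q3^4 - q3^3 - q3 + 1 = 0)
    (hq3u : ∀ q : ℝ, q ∈ Set.Ioo (1:ℝ) 2 → q^5 - q^4 - q^3 - q + 1 = 0 → q = q3) :
    ∀ k : ℕ, ((fun x : ℝ => (fun y : ℝ => q3 * y)^[3] (q3 * x - 1))^[k]) (q3 - 1) ∈
      Set.Icc (1 / q3) (1 / (q3^2 - q3)) := by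
  obtain ⟨⟨h1, h2⟩, hp⟩ := hq3
  -- the point q3 - 1 is a fixed point of the map
  have hfix : (fun x : ℝ => (fun y : ℝ => q3 * y)^[3] (q3 * x - 1)) (q3 - 1) = q3 - 1 := by
    show q3 * (q3 * (q3 * (q3 * (q3 - 1) - 1))) = q3 - 1
    nlinarith [hp]
  have hconst : ∀ k : ℕ,
      ((fun x : ℝ => (fun y : ℝ => q3 * y)^[3] (q3 * x - 1))^[k]) (q3 - 1) = q3 - 1 := by
    intro k
    induction k with
    | zero => simp
    | succ n ih => rw [Function.iterate_succ_apply', ih]; exact hfix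
  intro k
  rw [hconst k]
  have hq0 : (0:ℝ) < q3 := by linarith
  -- q3^2 - q3 > 1 : from q3^3 (q3^2 - q3 - 1) = q3 - 1 > 0
  have hgolden : q3^2 - q3 - 1 > 0 := by
    nlinarith [pow_pos hq0 3, sq_nonneg q3, sq_nonneg (q3 - 1), sq_nonneg (q3^2 - q3 - 1)]
  have hqq : (0:ℝ) < q3^2 - q3 := by nlinarith
  constructor
  · -- 1/q3 ≤ q3 - 1  ⟺  1 ≤ q3^2 - q3
    rw [div_le_iff₀ hq0]
    nlinarith
  · -- q3 - 1 ≤ 1/(q3^2 - q3)  ⟺  (q3-1)(q3^2-q3) ≤ 1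
    rw [le_div_iff₀ hqq]
    nlinarith [sq_nonneg (q3 - 1), sq_nonneg (q3^2 - q3 - 1), sq_nonneg (q3 - 2), sq_nonneg (q3^2 - 2*q3 + 1)]
end

section
/- Let q_3 be the unique root in (1,2) of x^5 - x^4 - x^3 - x + 1 = 0. Then for every k ≥ 0, the sequence 1 (1 0 0 0)^k 0 1 (1 0)^∞ is a q_3-expansion of 1; that is, Σ over this 0-1 sequence of δ_i q_3^{-i} equals 1. Also 1 (1 0 0 0)^∞ is a q_3-expansion of 1. -/
/-- The 0-1 sequence `1 (1000)^k 0 1 (10)^∞` (0-indexed). -/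
def seqA (k : ℕ) (i : ℕ) : ℕ :=
  if i = 0 then 1
  else if i ≤ 4 * k then (if (i - 1) % 4 = 0 then 1 else 0)
  else if i = 4 * k + 1 then 0
  else if i = 4 * k + 2 then 1
  else if (i - (4 * k + 3)) % 2 = 0 then 1 else 0

/-- The 0-1 sequence `1 (1000)^∞` (0-indexed). -/
def seqB (i : ℕ) : ℕ :=
  if i = 0 then 1 else if (i - 1) % 4 = 0 then 1 else 0

/-!
Put `r = q₃⁻¹`, so that the defining equation of `q₃` becomes `r + r² + r⁴ - r⁵ = 1`. Every
sequence in question is eventually periodic, so its value is a rational function of `r`: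
splitting off a prefix gives `V(δ) = ∑_{i<n} δᵢ rⁱ⁺¹ + rⁿ V(δ shifted by n)`, and `(10)^∞`,
`(1000)^∞` have values `r / (1 - r²)`, `r / (1 - r⁴)`. For `1 (1000)^k 0 1 (10)^∞` drop the
leading `1` and call the rest `τ_k`; then `r V(τ_k) = 1 - r` by induction on `k`, because
`V(τ_{k+1}) = r + r⁴ V(τ_k)` and the equation of `r` says exactly that `(1 - r) / r` is a fixed
point of this affine map.
-/

/-- With `r = q⁻¹` this is the value `∑ δᵢ q⁻ⁱ` of a `q`-expansion, re-indexed to start at `0`. -/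
noncomputable def expansionValue (r : ℝ) (δ : ℕ → ℕ) : ℝ :=
  ∑' i, (δ i : ℝ) * r ^ (i + 1)

section ExpansionValue

variable {r : ℝ} {δ : ℕ → ℕ}

theorem summable_digit_mul_pow {M : ℕ} (hr0 : 0 ≤ r) (hr1 : r < 1) (hδ : ∀ i, δ i ≤ M) :
    Summable fun i => (δ i : ℝ) * r ^ (i + 1) := by
  have hgeom : Summable fun i : ℕ => (M * r : ℝ) * r ^ i :=
    (summable_geometric_of_lt_one hr0 hr1).mul_left _
  refine hgeom.of_nonneg_of_le (fun i => by positivity) fun i => ?_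
  calc (δ i : ℝ) * r ^ (i + 1) ≤ M * r ^ (i + 1) := by gcongr; exact_mod_cast hδ i
    _ = M * r * r ^ i := by ring

theorem expansionValue_eq_sum_add {M : ℕ} (hr0 : 0 ≤ r) (hr1 : r < 1) (hδ : ∀ i, δ i ≤ M)
    (n : ℕ) :
    expansionValue r δ = ∑ i ∈ Finset.range n, (δ i : ℝ) * r ^ (i + 1) +
      r ^ n * expansionValue r fun i => δ (i + n) := by
  rw [expansionValue, ← (summable_digit_mul_pow hr0 hr1 hδ).sum_add_tsum_nat_add n,
    expansionValue, ← tsum_mul_left]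
  congr 2 with i
  ring

theorem expansionValue_indicator_mod (hr0 : 0 ≤ r) (hr1 : r < 1) {p : ℕ} (hp : 0 < p) :
    (1 - r ^ p) * expansionValue r (fun i => if i % p = 0 then 1 else 0) = r := by
  have hδ : ∀ i, (if i % p = 0 then 1 else 0) ≤ 1 := fun i => by split_ifs <;> omega
  have hprefix :
      ∑ i ∈ Finset.range p, ((if i % p = 0 then 1 else 0 : ℕ) : ℝ) * r ^ (i + 1) = r := by
    rw [Finset.sum_eq_single 0]
    · simp
    · intro i hi hi0
      rw [Nat.mod_eq_of_lt (Finset.mem_range.1 hi), if_neg hi0]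
      simp
    · simp [hp]
  have hshift := expansionValue_eq_sum_add hr0 hr1 hδ p
  simp only [Nat.add_mod_right] at hshift
  linear_combination hshift + hprefix

end ExpansionValue

theorem seqA_le_one (k i : ℕ) : seqA k i ≤ 1 := by
  unfold seqA; split_ifs <;> omega

theorem seqA_zero (k : ℕ) : seqA k 0 = 1 := rfl

theorem seqA_zero_add_three (i : ℕ) : seqA 0 (i + 3) = if i % 2 = 0 then 1 else 0 := by
  unfold seqA; split_ifs <;> omega

theorem seqA_succ_add_five (k i : ℕ) : seqA (k + 1) (i + 5) = seqA k (i + 1) := by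
  unfold seqA; split_ifs <;> omega

theorem seqB_le_one (i : ℕ) : seqB i ≤ 1 := by
  unfold seqB; split_ifs <;> omega

theorem seqB_succ (i : ℕ) : seqB (i + 1) = if i % 4 = 0 then 1 else 0 := by
  simp [seqB]

section RootEquation

variable {r : ℝ} (hr0 : 0 < r) (hr1 : r < 1)
include hr0 hr1

theorem mul_expansionValue_seqA_succ (hkey : r + r ^ 2 + r ^ 4 - r ^ 5 = 1) (k : ℕ) :
    r * expansionValue r (fun i => seqA k (i + 1)) = 1 - r := by
  have hδ : ∀ k i, seqA k (i + 1) ≤ 1 := fun k i => seqA_le_one k (i + 1)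
  induction k with
  | zero =>
    have hsplit := expansionValue_eq_sum_add hr0.le hr1 (hδ 0) 2
    have hperiodic := expansionValue_indicator_mod hr0.le hr1 (p := 2) (by norm_num)
    simp only [Finset.sum_range_succ, Finset.sum_range_zero, seqA_zero_add_three] at hsplit
    have h1 : seqA 0 1 = 0 := rfl
    have h2 : seqA 0 2 = 1 := rfl
    rw [h1, h2] at hsplit
    have hden : 1 - r ^ 2 ≠ 0 := by nlinarith
    apply mul_left_cancel₀ hden
    push_cast at hsplit
    linear_combination (1 - r ^ 2) * r * hsplit + r ^ 3 * hperiodic + hkey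
  | succ k ih =>
    have hsplit := expansionValue_eq_sum_add hr0.le hr1 (hδ (k + 1)) 4
    simp only [Finset.sum_range_succ, Finset.sum_range_zero, seqA_succ_add_five] at hsplit
    obtain ⟨h1, h2, h3, h4⟩ :
        seqA (k + 1) 1 = 1 ∧ seqA (k + 1) 2 = 0 ∧ seqA (k + 1) 3 = 0 ∧ seqA (k + 1) 4 = 0 := by
      refine ⟨?_, ?_, ?_, ?_⟩ <;> simp [seqA] <;> omega
    rw [h1, h2, h3, h4] at hsplit
    push_cast at hsplit
    linear_combination r * hsplit + r ^ 4 * ih + hkey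

theorem expansionValue_seqA (hkey : r + r ^ 2 + r ^ 4 - r ^ 5 = 1) (k : ℕ) :
    expansionValue r (seqA k) = 1 := by
  have hsplit := expansionValue_eq_sum_add hr0.le hr1 (seqA_le_one k) 1
  simp only [Finset.sum_range_one, seqA_zero] at hsplit
  linear_combination hsplit + mul_expansionValue_seqA_succ hr0 hr1 hkey k

theorem expansionValue_seqB (hkey : r + r ^ 2 + r ^ 4 - r ^ 5 = 1) :
    expansionValue r seqB = 1 := by
  have hsplit := expansionValue_eq_sum_add hr0.le hr1 seqB_le_one 1
  have hperiodic := expansionValue_indicator_mod hr0.le hr1 (p := 4) (by norm_num)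
  simp only [Finset.sum_range_one, seqB_succ] at hsplit
  have hden : 1 - r ^ 4 ≠ 0 := by nlinarith
  apply mul_left_cancel₀ hden
  push_cast [seqB] at hsplit
  linear_combination (1 - r ^ 4) * hsplit + r * hperiodic + hkey

end RootEquation

theorem q3_expansions_of_one_general (q3 : ℝ)
    (hq3 : q3 ∈ Set.Ioo (1:ℝ) 2 ∧ q3^5 - q3^4 - q3^3 - q3 + 1 = 0) :
    (∀ k : ℕ, ∑' i : ℕ, (seqA k i : ℝ) / q3 ^ (i + 1) = 1) ∧
    ∑' i : ℕ, (seqB i : ℝ) / q3 ^ (i + 1) = 1 := by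
  obtain ⟨⟨hq1, -⟩, hpoly⟩ := hq3
  have hq0 : q3 ≠ 0 := by positivity
  have hkey : q3⁻¹ + q3⁻¹ ^ 2 + q3⁻¹ ^ 4 - q3⁻¹ ^ 5 = 1 := by
    field_simp
    linear_combination -hpoly
  have hvalue (δ : ℕ → ℕ) :
      ∑' i : ℕ, (δ i : ℝ) / q3 ^ (i + 1) = expansionValue q3⁻¹ δ := by
    simp only [expansionValue, div_eq_mul_inv, inv_pow]
  have hr0 : 0 < q3⁻¹ := by positivity
  have hr1 : q3⁻¹ < 1 := inv_lt_one_of_one_lt₀ hq1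
  refine ⟨fun k => ?_, ?_⟩
  · rw [hvalue, expansionValue_seqA hr0 hr1 hkey]
  · rw [hvalue, expansionValue_seqB hr0 hr1 hkey]

/-- each 1(1000)^k 01(10)^∞ and 1(1000)^∞ is a q₃-expansion of 1. -/
theorem q3_expansions_of_one (q3 : ℝ)
    (hq3 : q3 ∈ Set.Ioo (1:ℝ) 2 ∧ q3^5 - q3^4 - q3^3 - q3 + 1 = 0)
    (hq3u : ∀ q : ℝ, q ∈ Set.Ioo (1:ℝ) 2 → q^5 - q^4 - q^3 - q + 1 = 0 → q = q3) :
    (∀ k : ℕ, ∑' i : ℕ, (seqA k i : ℝ) / q3 ^ (i + 1) = 1) ∧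
    ∑' i : ℕ, (seqB i : ℝ) / q3 ^ (i + 1) = 1 :=
  q3_expansions_of_one_general q3 hq3
end

section
/- Let q_3 be the unique root in (1,2) of x^5 - x^4 - x^3 - x + 1 = 0. The set of q_3-expansions of 1 is countably infinite. -/
open Filter Topology

namespace Q3Proof

/-- the candidate sequence 1(1000)^k 01(10)^∞ (0-indexed) -/
def q3seq (k : ℕ) : ℕ → ℕ := fun n =>
  if n = 0 then 1
  else if n < 4*k+1 then (if (n-1) % 4 = 0 then 1 else 0)
  else if n = 4*k+1 then 0
  else if n = 4*k+2 then 1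
  else if (n - (4*k+3)) % 2 = 0 then 1 else 0

/-- the candidate sequence 1(1000)^∞ -/
def q3seqInf : ℕ → ℕ := fun n =>
  if n = 0 then 1 else if (n-1) % 4 = 0 then 1 else 0

lemma q3seq01 (k i : ℕ) : q3seq k i = 0 ∨ q3seq k i = 1 := by
  unfold q3seq; split_ifs <;> simp

lemma q3seq_zero (k : ℕ) : q3seq k 0 = 1 := rfl

lemma q3seq_4j1 {k j : ℕ} (h : j < k) : q3seq k (4*j+1) = 1 := by
  unfold q3seq; split_ifs <;> first | rfl | omega | contradiction

lemma q3seq_4j2 {k j : ℕ} (h : j < k) : q3seq k (4*j+2) = 0 := by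
  unfold q3seq; split_ifs <;> first | rfl | omega | contradiction

lemma q3seq_4j3 {k j : ℕ} (h : j < k) : q3seq k (4*j+3) = 0 := by
  unfold q3seq; split_ifs <;> first | rfl | omega | contradiction

lemma q3seq_4j4 {k j : ℕ} (h : j < k) : q3seq k (4*j+4) = 0 := by
  unfold q3seq; split_ifs <;> first | rfl | omega | contradiction

lemma q3seq_4k1 (k : ℕ) : q3seq k (4*k+1) = 0 := by
  unfold q3seq; split_ifs <;> first | rfl | omega | contradiction

lemma q3seq_4k2 (k : ℕ) : q3seq k (4*k+2) = 1 := by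
  unfold q3seq; split_ifs <;> first | rfl | omega | contradiction

lemma q3seq_4k3 (k j : ℕ) : q3seq k (4*k+3+2*j) = 1 := by
  unfold q3seq; split_ifs <;> first | rfl | omega | contradiction

lemma q3seq_4k4 (k j : ℕ) : q3seq k (4*k+4+2*j) = 0 := by
  unfold q3seq; split_ifs <;> first | rfl | omega | contradiction

lemma q3seqInf_zero : q3seqInf 0 = 1 := rfl

lemma q3seqInf_4j1 (j : ℕ) : q3seqInf (4*j+1) = 1 := by
  unfold q3seqInf; split_ifs <;> first | rfl | omega | contradiction

lemma q3seqInf_4j2 (j : ℕ) : q3seqInf (4*j+2) = 0 := by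
  unfold q3seqInf; split_ifs <;> first | rfl | omega | contradiction

lemma q3seqInf_4j3 (j : ℕ) : q3seqInf (4*j+3) = 0 := by
  unfold q3seqInf; split_ifs <;> first | rfl | omega | contradiction

lemma q3seqInf_4j4 (j : ℕ) : q3seqInf (4*j+4) = 0 := by
  unfold q3seqInf; split_ifs <;> first | rfl | omega | contradiction

section Numeric
variable {q : ℝ} (h1 : 1 < q) (h2 : q < 2) (h5 : q^5 - q^4 - q^3 - q + 1 = 0)

include h1 h2 h5 in
lemma I1 : 1 < q * (q - 1) := by
  nlinarith [sq_nonneg (q-1), sq_nonneg q, sq_nonneg (q^2-q-1), sq_nonneg (q^2-q), sq_nonneg (q*(q-1)-1)]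

include h1 h2 h5 in
lemma I2 : 1 < (q^3 - q^2 - 1) * (q^2 - q) := by
  nlinarith [sq_nonneg (q-1), sq_nonneg (q^2-q-1), sq_nonneg (q^2-q), sq_nonneg (q^3-q^2-1), sq_nonneg (q^2-2), mul_pos (sub_pos.mpr h1) (sub_pos.mpr h1)]

include h1 h2 h5 in
lemma I3 : q * (q^4 - q^3 - q - 1) < 1 := by
  nlinarith [sq_nonneg (q-1), sq_nonneg (q^2-q-1), sq_nonneg (q^2-q), sq_nonneg (q^2-2), sq_nonneg (q^3-q^2-1)]

include h1 h2 h5 in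
lemma I4a : q * (q^2 - q - 1) < 1 := by
  nlinarith [sq_nonneg (q-1), sq_nonneg (q^2-q-1), sq_nonneg (q^2-q), sq_nonneg (q^2-2)]

include h1 h2 h5 in
lemma I4b : q * (q^3 - q^2 - q) < 1 := by
  nlinarith [sq_nonneg (q-1), sq_nonneg (q^2-q-1), sq_nonneg (q^2-q), sq_nonneg (q^2-2)]

end Numeric

/-- remainder sequence for digit sequence δ -/
def usec (q : ℝ) (δ : ℕ → ℕ) : ℕ → ℝ
  | 0 => 1
  | n+1 => q * usec q δ n - δ n

lemma usec_succ (q : ℝ) (δ : ℕ → ℕ) (n : ℕ) :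
    usec q δ (n+1) = q * usec q δ n - δ n := rfl

lemma partial_sum {q : ℝ} (hq : 0 < q) (δ : ℕ → ℕ) (n : ℕ) :
    ∑ i ∈ Finset.range n, (δ i : ℝ) / q ^ (i+1) = 1 - usec q δ n / q ^ n := by
  induction n with
  | zero => simp [usec]
  | succ n ih =>
    rw [Finset.sum_range_succ, ih, usec_succ]
    have hqn : q ^ n ≠ 0 := by positivity
    have hq' : q ≠ 0 := ne_of_gt hq
    field_simp
    ring

section Member
variable {q : ℝ}

lemma uA (h5 : q^5 - q^4 - q^3 - q + 1 = 0) (k : ℕ) :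
    ∀ j, j ≤ k → usec q (q3seq k) (4*j+1) = q - 1 := by
  intro j
  induction j with
  | zero =>
    intro _
    rw [show 4*0+1 = 0+1 from by omega, usec_succ]
    simp [usec, q3seq_zero]
  | succ j ih =>
    intro hj
    have hjk : j < k := by omega
    have e0 : usec q (q3seq k) (4*j+1) = q - 1 := ih (by omega)
    have e1 : usec q (q3seq k) (4*j+2) = q*(q-1) - 1 := by
      rw [show 4*j+2 = (4*j+1)+1 from by omega, usec_succ, e0, q3seq_4j1 hjk]; norm_num
    have e2 : usec q (q3seq k) (4*j+3) = q*(q*(q-1)-1) := by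
      rw [show 4*j+3 = (4*j+2)+1 from by omega, usec_succ, e1, q3seq_4j2 hjk]; norm_num
    have e3 : usec q (q3seq k) (4*j+4) = q*(q*(q*(q-1)-1)) := by
      rw [show 4*j+4 = (4*j+3)+1 from by omega, usec_succ, e2, q3seq_4j3 hjk]; norm_num
    have e4 : usec q (q3seq k) (4*(j+1)+1) = q*(q*(q*(q*(q-1)-1))) := by
      rw [show 4*(j+1)+1 = (4*j+4)+1 from by omega, usec_succ, e3, q3seq_4j4 hjk]; norm_num
    rw [e4]; linear_combination h5

lemma uA1 (h5 : q^5 - q^4 - q^3 - q + 1 = 0) {k j : ℕ} (hjk : j < k) :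
    usec q (q3seq k) (4*j+2) = q*(q-1) - 1 := by
  rw [show 4*j+2 = (4*j+1)+1 from by omega, usec_succ, uA h5 k j (le_of_lt hjk),
    q3seq_4j1 hjk]; norm_num

lemma uA2 (h5 : q^5 - q^4 - q^3 - q + 1 = 0) {k j : ℕ} (hjk : j < k) :
    usec q (q3seq k) (4*j+3) = q*(q*(q-1)-1) := by
  rw [show 4*j+3 = (4*j+2)+1 from by omega, usec_succ, uA1 h5 hjk, q3seq_4j2 hjk]; norm_num

lemma uA3 (h5 : q^5 - q^4 - q^3 - q + 1 = 0) {k j : ℕ} (hjk : j < k) :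
    usec q (q3seq k) (4*j+4) = q*(q*(q*(q-1)-1)) := by
  rw [show 4*j+4 = (4*j+3)+1 from by omega, usec_succ, uA2 h5 hjk, q3seq_4j3 hjk]; norm_num

lemma uB (h5 : q^5 - q^4 - q^3 - q + 1 = 0) (k : ℕ) :
    usec q (q3seq k) (4*k+2) = q*(q-1) := by
  rw [show 4*k+2 = (4*k+1)+1 from by omega, usec_succ, uA h5 k k le_rfl, q3seq_4k1]; norm_num

lemma uBB (h5 : q^5 - q^4 - q^3 - q + 1 = 0) (k : ℕ) :
    ∀ j, usec q (q3seq k) (4*k+3+2*j) = q^3 - q^2 - 1 := by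
  intro j
  induction j with
  | zero =>
    rw [show 4*k+3+2*0 = (4*k+2)+1 from by omega, usec_succ, uB h5 k, q3seq_4k2]
    push_cast; ring
  | succ j ih =>
    have e1 : usec q (q3seq k) (4*k+4+2*j) = q*(q^3-q^2-1) - 1 := by
      rw [show 4*k+4+2*j = (4*k+3+2*j)+1 from by omega, usec_succ, ih, q3seq_4k3]; norm_num
    rw [show 4*k+3+2*(j+1) = (4*k+4+2*j)+1 from by omega, usec_succ, e1, q3seq_4k4]
    push_cast; linear_combination h5

lemma uCC (h5 : q^5 - q^4 - q^3 - q + 1 = 0) (k j : ℕ) :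
    usec q (q3seq k) (4*k+4+2*j) = q*(q^3-q^2-1) - 1 := by
  rw [show 4*k+4+2*j = (4*k+3+2*j)+1 from by omega, usec_succ, uBB h5 k j, q3seq_4k3]; norm_num

lemma uBound (h1 : 1 < q) (h2 : q < 2) (h5 : q^5 - q^4 - q^3 - q + 1 = 0) (k n : ℕ) :
    |usec q (q3seq k) n| ≤ 32 := by
  have hb : ∀ x : ℝ, (x = 1 ∨ x = q-1 ∨ x = q*(q-1)-1 ∨ x = q*(q*(q-1)-1) ∨
      x = q*(q*(q*(q-1)-1)) ∨ x = q*(q-1) ∨ x = q^3-q^2-1 ∨ x = q*(q^3-q^2-1)-1) →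
      |x| ≤ 32 := by
    have hq2 : q^2 < 4 := by nlinarith
    have hq3 : q^3 < 8 := by nlinarith
    have hq4 : q^4 < 16 := by nlinarith
    rintro x (rfl|rfl|rfl|rfl|rfl|rfl|rfl|rfl) <;> rw [abs_le] <;> constructor <;> nlinarith
  apply hb
  rcases Nat.eq_zero_or_pos n with rfl | hn
  · left; rfl
  rcases lt_or_ge n (4*k+2) with hlt | hge
  · obtain ⟨j, r, hr4, hrep, hj0, hj1⟩ :
        ∃ j r, r < 4 ∧ n = 4*j+1+r ∧ (r = 0 → j ≤ k) ∧ (r ≠ 0 → j < k) :=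
      ⟨(n-1)/4, (n-1)%4, by omega, by omega, by omega, by omega⟩
    rcases r with _ | _ | _ | _ | r
    · right; left
      rw [show n = 4*j+1 from by omega]; exact uA h5 k j (hj0 rfl)
    · right; right; left
      rw [show n = 4*j+2 from by omega]; exact uA1 h5 (hj1 (by omega))
    · right; right; right; left
      rw [show n = 4*j+3 from by omega]; exact uA2 h5 (hj1 (by omega))
    · right; right; right; right; left
      rw [show n = 4*j+4 from by omega]; exact uA3 h5 (hj1 (by omega))
    · omega
  · rcases Nat.eq_or_lt_of_le hge with heq | hgt
    · right; right; right; right; right; left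
      rw [show n = 4*k+2 from by omega]; exact uB h5 k
    · rcases Nat.even_or_odd (n - (4*k+3)) with ⟨m, hm⟩ | ⟨m, hm⟩
      · right; right; right; right; right; right; left
        rw [show n = 4*k+3+2*m from by omega]; exact uBB h5 k m
      · right; right; right; right; right; right; right
        rw [show n = 4*k+4+2*m from by omega]; exact uCC h5 k m

lemma uTendsto (h1 : 1 < q) (h2 : q < 2) (h5 : q^5 - q^4 - q^3 - q + 1 = 0) (k : ℕ) :
    Filter.Tendsto (fun n => usec q (q3seq k) n / q ^ n) Filter.atTop (nhds 0) := by
  have hq0 : (0:ℝ) < q := lt_trans zero_lt_one h1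
  apply squeeze_zero_norm (a := fun n => 32 * (1/q)^n)
  · intro n
    have hqn : (0:ℝ) < q ^ n := by positivity
    rw [Real.norm_eq_abs, abs_div, abs_pow, abs_of_pos hq0,
      show (32:ℝ) * (1/q)^n = 32 / q^n from by rw [one_div, inv_pow]; ring]
    gcongr
    exact uBound h1 h2 h5 k n
  · have : Filter.Tendsto (fun n : ℕ => (1/q)^n) Filter.atTop (nhds 0) :=
      tendsto_pow_atTop_nhds_zero_of_lt_one (by positivity)
        (by rw [div_lt_one hq0]; exact h1)
    simpa using this.const_mul (32:ℝ)

lemma q3seq_hasSum (h1 : 1 < q) (h2 : q < 2) (h5 : q^5 - q^4 - q^3 - q + 1 = 0) (k : ℕ) :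
    HasSum (fun i => (q3seq k i : ℝ) / q ^ (i+1)) 1 := by
  have hq0 : (0:ℝ) < q := lt_trans zero_lt_one h1
  rw [hasSum_iff_tendsto_nat_of_nonneg (fun i => by positivity)]
  have he : (fun n => ∑ i ∈ Finset.range n, (q3seq k i:ℝ)/q^(i+1))
      = fun n => 1 - usec q (q3seq k) n / q^n := funext fun n => partial_sum hq0 _ n
  rw [he]
  simpa using tendsto_const_nhds.sub (uTendsto h1 h2 h5 k)

end Member

section Tail
variable {q : ℝ} {δ : ℕ → ℕ}

noncomputable def tfun (q : ℝ) (δ : ℕ → ℕ) (n : ℕ) : ℝ := ∑' i, (δ (n+i) : ℝ)/q^(i+1)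

lemma geom_summable (h1 : 1 < q) : Summable (fun i : ℕ => (1/q)^(i+1)) := by
  have hq0 : (0:ℝ) < q := lt_trans zero_lt_one h1
  have h := summable_geometric_of_lt_one (r := 1/q) (by positivity)
    (by rw [div_lt_one hq0]; exact h1)
  exact (h.mul_left (1/q)).congr fun i => by ring

lemma geom_tsum (h1 : 1 < q) : ∑' i : ℕ, (1/q)^(i+1) = 1/(q-1) := by
  have hq0 : (0:ℝ) < q := lt_trans zero_lt_one h1
  have h1q : (1/q:ℝ) < 1 := by rw [div_lt_one hq0]; exact h1
  calc ∑' i : ℕ, (1/q)^(i+1) = ∑' i : ℕ, (1/q)*(1/q)^i := tsum_congr fun i => by ring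
    _ = (1/q) * ∑' i : ℕ, (1/q)^i := tsum_mul_left
    _ = (1/q) * (1 - 1/q)⁻¹ := by rw [tsum_geometric_of_lt_one (by positivity) h1q]
    _ = 1/(q-1) := by
        rw [one_div, one_div, ← mul_inv]
        congr 1
        field_simp

lemma dle1 (hd : ∀ i, δ i = 0 ∨ δ i = 1) (i : ℕ) : (δ i : ℝ) ≤ 1 := by
  rcases hd i with h | h <;> simp [h]

lemma tsummable (h1 : 1 < q) (hd : ∀ i, δ i = 0 ∨ δ i = 1) (n : ℕ) :
    Summable (fun i => (δ (n+i) : ℝ)/q^(i+1)) := by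
  have hq0 : (0:ℝ) < q := lt_trans zero_lt_one h1
  refine Summable.of_nonneg_of_le (fun i => by positivity) (fun i => ?_) (geom_summable h1)
  rw [div_pow, one_pow]
  gcongr
  exact dle1 hd _

lemma tfun_nonneg (h1 : 1 < q) (n : ℕ) : 0 ≤ tfun q δ n := by
  have hq0 : (0:ℝ) < q := lt_trans zero_lt_one h1
  exact tsum_nonneg fun i => by positivity

lemma tfun_le (h1 : 1 < q) (hd : ∀ i, δ i = 0 ∨ δ i = 1) (n : ℕ) :
    (q - 1) * tfun q δ n ≤ 1 := by
  have hq0 : (0:ℝ) < q := lt_trans zero_lt_one h1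
  have hb : tfun q δ n ≤ ∑' i : ℕ, (1/q)^(i+1) := by
    refine Summable.tsum_le_tsum (fun i => ?_) (tsummable h1 hd n) (geom_summable h1)
    rw [div_pow, one_pow]
    gcongr
    exact dle1 hd _
  rw [geom_tsum h1] at hb
  have hq1 : (0:ℝ) < q - 1 := by linarith
  calc (q-1) * tfun q δ n ≤ (q-1) * (1/(q-1)) := by
        exact mul_le_mul_of_nonneg_left hb (le_of_lt hq1)
    _ = 1 := by field_simp

lemma tfun_zero (hs : ∑' i : ℕ, (δ i : ℝ) / q ^ (i + 1) = 1) : tfun q δ 0 = 1 := by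
  unfold tfun; simpa using hs

lemma tfun_succ (h1 : 1 < q) (hd : ∀ i, δ i = 0 ∨ δ i = 1) (n : ℕ) :
    tfun q δ (n+1) = q * tfun q δ n - δ n := by
  have hq0 : (0:ℝ) < q := lt_trans zero_lt_one h1
  have hq0' : q ≠ 0 := ne_of_gt hq0
  have h := Summable.tsum_eq_zero_add (tsummable h1 hd n)
  have e : ∑' i : ℕ, (δ (n+(i+1)) : ℝ)/q^(i+1+1) = (1/q) * tfun q δ (n+1) := by
    unfold tfun
    rw [← tsum_mul_left]
    exact tsum_congr fun i => by
      rw [show n+(i+1) = n+1+i from by omega, pow_succ]; ring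
  rw [e] at h
  have h' : tfun q δ n = (δ n : ℝ)/q + (1/q) * tfun q δ (n+1) := by
    unfold tfun at h ⊢; simpa using h
  field_simp at h'
  linarith [h']

lemma force1 (h1 : 1 < q) (hd : ∀ i, δ i = 0 ∨ δ i = 1) {n : ℕ}
    (h : 1 < q * (q-1) * tfun q δ n) : δ n = 1 := by
  rcases hd n with h0 | h1'
  · exfalso
    have ht := tfun_le h1 hd (n+1)
    have hr := tfun_succ h1 hd n
    rw [h0] at hr
    push_cast at hr
    nlinarith [hr, ht]
  · exact h1'

lemma force0 (h1 : 1 < q) (hd : ∀ i, δ i = 0 ∨ δ i = 1) {n : ℕ}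
    (h : q * tfun q δ n < 1) : δ n = 0 := by
  rcases hd n with h0 | h1'
  · exact h0
  · exfalso
    have ht := tfun_nonneg (δ := δ) h1 (n+1)
    have hr := tfun_succ h1 hd n
    rw [h1'] at hr
    push_cast at hr
    linarith

end Tail

section Steps
variable {q : ℝ} {δ : ℕ → ℕ}
variable (h1 : 1 < q) (h2 : q < 2) (h5 : q^5 - q^4 - q^3 - q + 1 = 0)
variable (hd : ∀ i, δ i = 0 ∨ δ i = 1)

include h1 h2 h5 hd in
lemma stepA {n : ℕ} (htn : tfun q δ n = q - 1) (hd1 : δ n = 1) :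
    δ (n+1) = 0 ∧ δ (n+2) = 0 ∧ δ (n+3) = 0 ∧ tfun q δ (n+4) = q - 1 := by
  have e1 : tfun q δ (n+1) = q*(q-1) - 1 := by
    rw [tfun_succ h1 hd, htn, hd1]; norm_num
  have d1 : δ (n+1) = 0 := force0 h1 hd (by
    rw [e1]
    calc q*(q*(q-1)-1) = q*(q^2-q-1) := by ring
      _ < 1 := I4a h1 h2 h5)
  have e2 : tfun q δ (n+2) = q*(q*(q-1)-1) := by
    rw [show n+2 = (n+1)+1 from rfl, tfun_succ h1 hd, e1, d1]; norm_num
  have d2 : δ (n+2) = 0 := force0 h1 hd (by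
    rw [e2]
    calc q*(q*(q*(q-1)-1)) = q*(q^3-q^2-q) := by ring
      _ < 1 := I4b h1 h2 h5)
  have e3 : tfun q δ (n+3) = q*(q*(q*(q-1)-1)) := by
    rw [show n+3 = (n+2)+1 from rfl, tfun_succ h1 hd, e2, d2]; norm_num
  have d3 : δ (n+3) = 0 := force0 h1 hd (by
    rw [e3]
    calc q*(q*(q*(q*(q-1)-1))) = q - 1 := by linear_combination h5
      _ < 1 := by linarith)
  have e4 : tfun q δ (n+4) = q - 1 := by
    rw [show n+4 = (n+3)+1 from rfl, tfun_succ h1 hd, e3, d3]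
    push_cast; linear_combination h5
  exact ⟨d1, d2, d3, e4⟩

include h1 h2 h5 hd in
lemma stepB {m : ℕ} (htm : tfun q δ m = q^3 - q^2 - 1) :
    δ m = 1 ∧ δ (m+1) = 0 ∧ tfun q δ (m+2) = q^3 - q^2 - 1 := by
  have d0 : δ m = 1 := force1 h1 hd (by
    rw [htm]
    calc (1:ℝ) < (q^3-q^2-1)*(q^2-q) := I2 h1 h2 h5
      _ = q*(q-1)*(q^3-q^2-1) := by ring)
  have e1 : tfun q δ (m+1) = q*(q^3-q^2-1) - 1 := by
    rw [tfun_succ h1 hd, htm, d0]; norm_num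
  have d1 : δ (m+1) = 0 := force0 h1 hd (by
    rw [e1]
    calc q*(q*(q^3-q^2-1)-1) = q*(q^4-q^3-q-1) := by ring
      _ < 1 := I3 h1 h2 h5)
  have e2 : tfun q δ (m+2) = q^3-q^2-1 := by
    rw [show m+2 = (m+1)+1 from rfl, tfun_succ h1 hd, e1, d1]
    push_cast; linear_combination h5
  exact ⟨d0, d1, e2⟩

include h1 h2 h5 hd in
lemma startS (hs : ∑' i : ℕ, (δ i : ℝ) / q ^ (i + 1) = 1) :
    δ 0 = 1 ∧ tfun q δ 1 = q - 1 := by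
  have d0 : δ 0 = 1 := force1 h1 hd (by
    rw [tfun_zero hs, mul_one]; exact I1 h1 h2 h5)
  refine ⟨d0, ?_⟩
  rw [show (1:ℕ) = 0+1 from rfl, tfun_succ h1 hd, tfun_zero hs, d0]; norm_num

include h1 h2 h5 hd in
lemma chainS (hs : ∑' i : ℕ, (δ i : ℝ) / q ^ (i + 1) = 1) :
    ∀ k, (∀ j, j < k → δ (4*j+1) = 1) → tfun q δ (4*k+1) = q - 1 := by
  intro k
  induction k with
  | zero =>
    intro _
    rw [show 4*0+1 = 1 from rfl]
    exact (startS h1 h2 h5 hd hs).2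
  | succ k ih =>
    intro hall
    have ht := ih (fun j hj => hall j (by omega))
    have hstep := stepA h1 h2 h5 hd ht (hall k (by omega))
    rw [show 4*(k+1)+1 = (4*k+1)+4 from by omega]
    exact hstep.2.2.2

include h1 h2 h5 hd in
lemma tailB {n : ℕ} (htn : tfun q δ n = q - 1) (hd0 : δ n = 0) :
    δ (n+1) = 1 ∧ ∀ j, δ (n+2+2*j) = 1 ∧ δ (n+3+2*j) = 0 := by
  have e1 : tfun q δ (n+1) = q*(q-1) := by
    rw [tfun_succ h1 hd, htn, hd0]; norm_num
  have d1 : δ (n+1) = 1 := force1 h1 hd (by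
    rw [e1]
    nlinarith [I1 h1 h2 h5])
  have e2 : tfun q δ (n+2) = q^3-q^2-1 := by
    rw [show n+2 = (n+1)+1 from rfl, tfun_succ h1 hd, e1, d1]
    push_cast; ring
  have key : ∀ j, tfun q δ (n+2+2*j) = q^3-q^2-1 := by
    intro j
    induction j with
    | zero => simpa using e2
    | succ j ih =>
      rw [show n+2+2*(j+1) = (n+2+2*j)+2 from by omega]
      exact (stepB h1 h2 h5 hd ih).2.2
  refine ⟨d1, fun j => ?_⟩
  obtain ⟨a, b, -⟩ := stepB h1 h2 h5 hd (key j)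
  exact ⟨a, by rw [show n+3+2*j = (n+2+2*j)+1 from by omega]; exact b⟩

include h1 h2 h5 hd in
lemma classify (hs : ∑' i : ℕ, (δ i : ℝ) / q ^ (i + 1) = 1) :
    δ = q3seqInf ∨ ∃ k, δ = q3seq k := by
  by_cases hall : ∀ k, δ (4*k+1) = 1
  · left
    have hchain : ∀ k, tfun q δ (4*k+1) = q - 1 :=
      fun k => chainS h1 h2 h5 hd hs k (fun j _ => hall j)
    funext n
    rcases Nat.eq_zero_or_pos n with rfl | hn
    · rw [(startS h1 h2 h5 hd hs).1, q3seqInf_zero]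
    obtain ⟨j, r, hr4, hrep⟩ : ∃ j r, r < 4 ∧ n = 4*j+1+r :=
      ⟨(n-1)/4, (n-1)%4, by omega, by omega⟩
    have hblock := stepA h1 h2 h5 hd (hchain j) (hall j)
    rcases r with _ | _ | _ | _ | r
    · rw [show n = 4*j+1 from by omega, q3seqInf_4j1 j]; exact hall j
    · rw [show n = 4*j+2 from by omega, q3seqInf_4j2 j,
        show 4*j+2 = (4*j+1)+1 from by omega]
      exact hblock.1
    · rw [show n = 4*j+3 from by omega, q3seqInf_4j3 j,
        show 4*j+3 = (4*j+1)+2 from by omega]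
      exact hblock.2.1
    · rw [show n = 4*j+4 from by omega, q3seqInf_4j4 j,
        show 4*j+4 = (4*j+1)+3 from by omega]
      exact hblock.2.2.1
    · omega
  · right
    push_neg at hall
    have hex : ∃ k, δ (4*k+1) = 0 := by
      obtain ⟨k, hk⟩ := hall
      exact ⟨k, (hd (4*k+1)).resolve_right hk⟩
    classical
    let k := Nat.find hex
    have hk0 : δ (4*k+1) = 0 := Nat.find_spec hex
    have hmin : ∀ j, j < k → δ (4*j+1) = 1 := by
      intro j hj
      have := Nat.find_min hex hj
      exact (hd (4*j+1)).resolve_left this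
    have htk : tfun q δ (4*k+1) = q - 1 := chainS h1 h2 h5 hd hs k hmin
    have htail := tailB h1 h2 h5 hd htk hk0
    refine ⟨k, funext fun n => ?_⟩
    rcases Nat.eq_zero_or_pos n with rfl | hn
    · rw [(startS h1 h2 h5 hd hs).1, q3seq_zero]
    rcases lt_or_ge n (4*k+2) with hlt | hge
    · obtain ⟨j, r, hr4, hrep, hj0, hj1⟩ :
          ∃ j r, r < 4 ∧ n = 4*j+1+r ∧ (r = 0 → j ≤ k) ∧ (r ≠ 0 → j < k) :=
        ⟨(n-1)/4, (n-1)%4, by omega, by omega, by omega, by omega⟩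
      rcases r with _ | _ | _ | _ | r
      · rcases Nat.eq_or_lt_of_le (hj0 rfl) with heq | hjk
        · rw [show n = 4*k+1 from by omega, q3seq_4k1 k]; exact hk0
        · rw [show n = 4*j+1 from by omega, q3seq_4j1 hjk]; exact hmin j hjk
      · have hjk := hj1 (by omega)
        have hblock := stepA h1 h2 h5 hd (chainS h1 h2 h5 hd hs j (fun i hi => hmin i (by omega)))
          (hmin j hjk)
        rw [show n = 4*j+2 from by omega, q3seq_4j2 hjk,
          show 4*j+2 = (4*j+1)+1 from by omega]
        exact hblock.1
      · have hjk := hj1 (by omega)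
        have hblock := stepA h1 h2 h5 hd (chainS h1 h2 h5 hd hs j (fun i hi => hmin i (by omega)))
          (hmin j hjk)
        rw [show n = 4*j+3 from by omega, q3seq_4j3 hjk,
          show 4*j+3 = (4*j+1)+2 from by omega]
        exact hblock.2.1
      · have hjk := hj1 (by omega)
        have hblock := stepA h1 h2 h5 hd (chainS h1 h2 h5 hd hs j (fun i hi => hmin i (by omega)))
          (hmin j hjk)
        rw [show n = 4*j+4 from by omega, q3seq_4j4 hjk,
          show 4*j+4 = (4*j+1)+3 from by omega]
        exact hblock.2.2.1
      · omega
    · rcases Nat.eq_or_lt_of_le hge with heq | hgt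
      · rw [show n = 4*k+2 from by omega, q3seq_4k2 k,
          show 4*k+2 = (4*k+1)+1 from by omega]
        exact htail.1
      · rcases Nat.even_or_odd (n - (4*k+3)) with ⟨m, hm⟩ | ⟨m, hm⟩
        · rw [show n = 4*k+3+2*m from by omega, q3seq_4k3 k m,
            show 4*k+3+2*m = (4*k+1)+2+2*m from by omega]
          exact (htail.2 m).1
        · rw [show n = 4*k+4+2*m from by omega, q3seq_4k4 k m,
            show 4*k+4+2*m = (4*k+1)+3+2*m from by omega]
          exact (htail.2 m).2

end Steps

lemma q3seq_inj : Function.Injective q3seq := by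
  have key : ∀ a b : ℕ, a < b → q3seq a ≠ q3seq b := by
    intro a b hab hne
    have e1 : q3seq a (4*a+1) = 0 := q3seq_4k1 a
    have e2 : q3seq b (4*a+1) = 1 := q3seq_4j1 hab
    rw [hne] at e1
    omega
  intro a b hab
  by_contra hne
  rcases Nat.lt_or_ge a b with h | h
  · exact key a b h hab
  · exact key b a (lt_of_le_of_ne h (Ne.symm hne)) hab.symm

end Q3Proof

/-- the set of q₃-expansions of 1 is countably infinite. -/
theorem q3_countably_many_expansions (q3 : ℝ)
    (hq3 : q3 ∈ Set.Ioo (1:ℝ) 2 ∧ q3^5 - q3^4 - q3^3 - q3 + 1 = 0)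
    (hq3u : ∀ q : ℝ, q ∈ Set.Ioo (1:ℝ) 2 → q^5 - q^4 - q^3 - q + 1 = 0 → q = q3) :
    Set.Countable {δ : ℕ → ℕ | (∀ i, δ i = 0 ∨ δ i = 1) ∧
        ∑' i : ℕ, (δ i : ℝ) / q3 ^ (i + 1) = 1} ∧
    Set.Infinite {δ : ℕ → ℕ | (∀ i, δ i = 0 ∨ δ i = 1) ∧
        ∑' i : ℕ, (δ i : ℝ) / q3 ^ (i + 1) = 1} := by
  obtain ⟨⟨h1, h2⟩, h5⟩ := hq3
  constructor
  · have hsub : {δ : ℕ → ℕ | (∀ i, δ i = 0 ∨ δ i = 1) ∧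
        ∑' i : ℕ, (δ i : ℝ) / q3 ^ (i + 1) = 1} ⊆
        insert Q3Proof.q3seqInf (Set.range Q3Proof.q3seq) := by
      rintro δ ⟨hd, hs⟩
      rcases Q3Proof.classify h1 h2 h5 hd hs with h | ⟨k, h⟩
      · exact Set.mem_insert_iff.mpr (Or.inl h)
      · exact Set.mem_insert_iff.mpr (Or.inr ⟨k, h.symm⟩)
    exact Set.Countable.mono hsub ((Set.countable_range _).insert _)
  · exact Set.infinite_of_injective_forall_mem Q3Proof.q3seq_inj
      (fun k => ⟨Q3Proof.q3seq01 k, (Q3Proof.q3seq_hasSum h1 h2 h5 k).tsum_eq⟩)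
end

section
/- Let q_1* ≈ -1.20458 be the unique real root of x^6 - x^4 - x^3 - 2x^2 - x - 1 in the interval (-1.3, -1.1). For every sequence (δ_i) ∈ {0,1}^ℕ, one has 1/q_1* + 1/(q_1*)^2 + (1/(q_1*)^7) Σ_{i=1}^∞ δ_i (q_1*)^{-i} < 1. -/
/-!
With `r = 1/q ∈ (-1, 0)`, a term `a * r ^ (i + 1)` with `0 ≤ a ≤ 1` is at least
`min 0 (r ^ (i + 1)) = (r ^ (i + 1) - (-r) ^ (i + 1)) / 2`, so the series is bounded below by
the sum of its negative terms, `(r / (1 - r) + r / (1 + r)) / 2 = q / (q ^ 2 - 1)`.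
In `t = -x` the sextic is `t ^ 4 * (t ^ 2 - 1) + t * (t - 1) ^ 2 - 1`, which is negative on
`[1, 6/5]`; hence `q < -6/5`. There `1/q + 1/q^2 ≤ 0` and the tail term is at most
`1 / (q ^ 6 * (q ^ 2 - 1)) < 1`.
-/

theorem hasSum_pow_succ {r : ℝ} (hr : |r| < 1) :
    HasSum (fun i => r ^ (i + 1)) (r / (1 - r)) := by
  simpa [pow_succ', div_eq_mul_inv] using (hasSum_geometric_of_abs_lt_one hr).mul_left r

theorem div_one_sub_sq_le_tsum_mul_pow_succ {r : ℝ} (hr₀ : r ≤ 0) (hr₁ : -1 < r) {a : ℕ → ℝ}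
    (ha₀ : ∀ i, 0 ≤ a i) (ha₁ : ∀ i, a i ≤ 1) :
    r / (1 - r ^ 2) ≤ ∑' i, a i * r ^ (i + 1) := by
  have habs : |r| = -r := abs_of_nonpos hr₀
  have hgeom := hasSum_pow_succ (r := r) (by rw [habs]; linarith)
  have hgeom_abs := hasSum_pow_succ (r := -r) (by rw [abs_neg, habs]; linarith)
  have hval : (r / (1 - r) - -r / (1 - -r)) / 2 = r / (1 - r ^ 2) := by
    have : 1 - r ≠ 0 := by linarith
    have : 1 + r ≠ 0 := by linarith
    have : 1 - r ^ 2 ≠ 0 := by nlinarith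
    rw [sub_neg_eq_add]
    field_simp
    ring
  have hlower : HasSum (fun i => (r ^ (i + 1) - (-r) ^ (i + 1)) / 2) (r / (1 - r ^ 2)) :=
    hval ▸ (hgeom.sub hgeom_abs).div_const 2
  have hpow_abs (i : ℕ) : |r ^ (i + 1)| = (-r) ^ (i + 1) := by rw [abs_pow, habs]
  have hterm (i : ℕ) : (r ^ (i + 1) - (-r) ^ (i + 1)) / 2 ≤ a i * r ^ (i + 1) := by
    rw [← hpow_abs]
    rcases abs_cases (r ^ (i + 1)) with ⟨h, h'⟩ | ⟨h, h'⟩ <;> nlinarith [ha₀ i, ha₁ i]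
  have hsumm : Summable (fun i => a i * r ^ (i + 1)) := by
    refine Summable.of_norm_bounded hgeom_abs.summable fun i => ?_
    rw [norm_mul, Real.norm_eq_abs, Real.norm_eq_abs, hpow_abs, abs_of_nonneg (ha₀ i)]
    exact mul_le_of_le_one_left (pow_nonneg (by linarith) _) (ha₁ i)
  exact hasSum_le hterm hlower hsumm.hasSum

theorem le_tsum_div_pow_succ_of_lt_neg_one {q : ℝ} (hq : q < -1) {a : ℕ → ℝ}
    (ha₀ : ∀ i, 0 ≤ a i) (ha₁ : ∀ i, a i ≤ 1) :
    q / (q ^ 2 - 1) ≤ ∑' i, a i / q ^ (i + 1) := by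
  have hq₀ : q ≠ 0 := by linarith
  have hr₁ : -1 < q⁻¹ := by rw [neg_lt, ← inv_neg]; exact inv_lt_one_of_one_lt₀ (by linarith)
  have hval : q⁻¹ / (1 - q⁻¹ ^ 2) = q / (q ^ 2 - 1) := by
    have : q ^ 2 - 1 ≠ 0 := by nlinarith
    field_simp
  have h := div_one_sub_sq_le_tsum_mul_pow_succ (inv_nonpos.2 (by linarith)) hr₁ ha₀ ha₁
  rw [hval] at h
  simpa only [div_eq_mul_inv, inv_pow] using h

theorem sextic_neg_of_mem_Icc {x : ℝ} (h₁ : -6 / 5 ≤ x) (h₂ : x ≤ -1) :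
    x ^ 6 - x ^ 4 - x ^ 3 - 2 * x ^ 2 - x - 1 < 0 := by
  have hx : x ^ 6 - x ^ 4 - x ^ 3 - 2 * x ^ 2 - x - 1
      = (-x) ^ 4 * ((-x) ^ 2 - 1) + (-x) * (-x - 1) ^ 2 - 1 := by ring
  have ht₁ : 1 ≤ -x := by linarith
  have ht₂ : -x ≤ 6 / 5 := by linarith
  have : 0 ≤ (-x) ^ 2 - 1 := by nlinarith
  have : 0 ≤ -x - 1 := by linarith
  rw [hx]
  calc (-x) ^ 4 * ((-x) ^ 2 - 1) + (-x) * (-x - 1) ^ 2 - 1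
      ≤ (6 / 5) ^ 4 * ((6 / 5) ^ 2 - 1) + 6 / 5 * (6 / 5 - 1) ^ 2 - 1 := by gcongr
    _ < 0 := by norm_num

theorem one_lt_pow_six_mul_sq_sub_one {q : ℝ} (hq : q < -6 / 5) : 1 < q ^ 6 * (q ^ 2 - 1) := by
  have hq₂ : 36 / 25 < q ^ 2 := by nlinarith
  calc (1 : ℝ) < (36 / 25) ^ 3 * (36 / 25 - 1) := by norm_num
    _ < (q ^ 2) ^ 3 * (q ^ 2 - 1) := by gcongr
    _ = q ^ 6 * (q ^ 2 - 1) := by ring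

theorem conjugate_root_bound_general (q : ℝ)
    (hq : q ∈ Set.Ioo (-1.3:ℝ) (-1.1) ∧ q^6 - q^4 - q^3 - 2*q^2 - q - 1 = 0) :
    ∀ δ : ℕ → ℕ, (∀ i, δ i = 0 ∨ δ i = 1) →
      1 / q + 1 / q^2 + (1 / q^7) * ∑' i : ℕ, (δ i : ℝ) / q ^ (i + 1) < 1 := by
  intro δ hδ
  obtain ⟨⟨-, hq_lt⟩, hroot⟩ := hq
  have hq : q < -6 / 5 := by
    by_contra! h
    exact (sextic_neg_of_mem_Icc h (by linarith)).ne hroot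
  have hq₀ : q ≠ 0 := by linarith
  have hS : q / (q ^ 2 - 1) ≤ ∑' i : ℕ, (δ i : ℝ) / q ^ (i + 1) :=
    le_tsum_div_pow_succ_of_lt_neg_one (by linarith) (fun i => Nat.cast_nonneg _)
      (fun i => by rcases hδ i with h | h <;> simp [h])
  have hq₇ : 1 / q ^ 7 ≤ 0 := one_div_nonpos.2 (Odd.pow_nonpos (by decide) (by linarith))
  have hhead : 1 / q + 1 / q ^ 2 ≤ 0 := by
    rw [show 1 / q + 1 / q ^ 2 = (q + 1) / q ^ 2 by field_simp]
    exact div_nonpos_of_nonpos_of_nonneg (by linarith) (by positivity)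
  have hden := one_lt_pow_six_mul_sq_sub_one hq
  have htail : 1 / q ^ 7 * (q / (q ^ 2 - 1)) < 1 := by
    rw [show 1 / q ^ 7 * (q / (q ^ 2 - 1)) = 1 / (q ^ 6 * (q ^ 2 - 1)) by field_simp]
    exact (div_lt_one (by linarith)).2 hden
  linarith [mul_le_mul_of_nonpos_left hS hq₇]

/-- for the conjugate root q₁* ∈ (-1.3,-1.1) of x⁶-x⁴-x³-2x²-x-1,
the expression 1/q + 1/q² + q⁻⁷ Σ δᵢ q⁻ⁱ is always < 1. -/
theorem conjugate_root_bound (q : ℝ)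
    (hq : q ∈ Set.Ioo (-1.3:ℝ) (-1.1) ∧ q^6 - q^4 - q^3 - 2*q^2 - q - 1 = 0)
    (hqu : ∀ r : ℝ, r ∈ Set.Ioo (-1.3:ℝ) (-1.1) → r^6 - r^4 - r^3 - 2*r^2 - r - 1 = 0 → r = q) :
    ∀ δ : ℕ → ℕ, (∀ i, δ i = 0 ∨ δ i = 1) →
      1 / q + 1 / q^2 + (1 / q^7) * ∑' i : ℕ, (δ i : ℝ) / q ^ (i + 1) < 1 :=
  conjugate_root_bound_general q hq
end

section
/- Let q_1 be the unique root in (1,2) of x^6 - x^4 - x^3 - 2x^2 - x - 1 = 0, and T_0(x)=q_1 x, T_1(x)=q_1 x - 1. Then the point w = T_0^5(T_1^2(1)) = q_1^7 - q_1^6 - q_1^5 lies in the switch region [1/q_1, 1/(q_1^2 - q_1)]. -/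
/-- w = T₀⁵(T₁²(1)) = q₁⁷ - q₁⁶ - q₁⁵ lies in the switch region. -/
theorem w_in_switch_region (q1 : ℝ)
    (hq1 : q1 ∈ Set.Ioo (1:ℝ) 2 ∧ q1^6 - q1^4 - q1^3 - 2*q1^2 - q1 - 1 = 0)
    (hq1u : ∀ q : ℝ, q ∈ Set.Ioo (1:ℝ) 2 → q^6 - q^4 - q^3 - 2*q^2 - q - 1 = 0 → q = q1) :
    (fun x : ℝ => q1 * x)^[5] ((fun x : ℝ => q1 * x - 1) ((fun x : ℝ => q1 * x - 1) 1)) =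
      q1^7 - q1^6 - q1^5 ∧
    q1^7 - q1^6 - q1^5 ∈ Set.Icc (1 / q1) (1 / (q1^2 - q1)) := by
  obtain ⟨⟨h1, h2⟩, hP⟩ := hq1
  have hq0 : (0:ℝ) < q1 := by linarith
  have hlb : (1.64:ℝ) < q1 := by
    nlinarith [sq_nonneg (q1-1.64), sq_nonneg (q1*(q1-1.64)), sq_nonneg (q1^2*(q1-1.64)),
      sq_nonneg (q1-1), sq_nonneg q1, mul_pos (sub_pos.2 h1) (sub_pos.2 h2)]
  have hub : q1 < 1.66 := by
    nlinarith [sq_nonneg (q1-1.66), sq_nonneg (q1*(q1-1.66)), sq_nonneg (q1^2*(q1-1.66)),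
      sq_nonneg (q1-1), mul_pos (sub_pos.2 h1) (sub_pos.2 h2)]
  have hmul : (q1^3 - 2*q1^2 + q1) * (q1^6 - q1^4 - q1^3 - 2*q1^2 - q1 - 1) = 0 := by
    rw [hP]; ring
  constructor
  · show q1 * (q1 * (q1 * (q1 * (q1 * (q1 * (q1 * 1 - 1) - 1))))) = _
    ring
  constructor
  · rw [div_le_iff₀ hq0]; nlinarith [hP, mul_pos hq0 hq0, sq_nonneg (q1-1.645)]
  · rw [le_div_iff₀ (by nlinarith : (0:ℝ) < q1^2 - q1)]
    nlinarith [hmul, sq_nonneg (q1-1.65), sq_nonneg (q1^2-2.72), mul_pos hq0 hq0]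
end
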